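/- The Frölicher–Nijenhuis bracket of the vertical endomorphism J and the Jacobi endomorphism Φ satisfies [J,Φ] = 3R + Φ∧dt: for all smooth vector fields X, Y on E, [JX,ΦY] + [ΦX,JY] + (J∘Φ + Φ∘J)([X,Y]) − J([X,ΦY]) − J([ΦX,Y]) − Φ([X,JY]) − Φ([JX,Y]) = 3 R(X,Y) + dt(Y)Φ(X) − dt(X)Φ(Y), where R(X,Y) := Σ_k ( ½ Σ_{i,j} R^k_{ij} (δx^i(X)δx^j(Y) − δx^i(Y)δx^j(X)) + Σ_i R^k_i (dt(X)δx^i(Y) − dt(Y)δx^i(X)) ) ∂/∂y^k. -/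

import Mathlib

noncomputable section

/-- The local model `E = ℝ × (Fin n → ℝ) × (Fin n → ℝ)` of the first jet bundle `J¹π`,
with coordinates `(t, xⁱ, yⁱ)`.  Tangent vectors at a point are identified with
elements of `E n` itself. -/
abbrev E (n : ℕ) : Type := ℝ × (Fin n → ℝ) × (Fin n → ℝ)

variable {n : ℕ}

/-- A map between normed spaces is `C^∞`-smooth. -/
def Cinf {α β : Type*} [NormedAddCommGroup α] [NormedSpace ℝ α]
    [NormedAddCommGroup β] [NormedSpace ℝ β] (f : α → β) : Prop :=
  ContDiff ℝ (⊤ : ℕ∞) f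

/-- A tangent vector having only a `y`-component. -/
def ypart (w : Fin n → ℝ) : E n := (0, 0, w)

/-- The coordinate vector `∂/∂yⁱ`. -/
def pdy (i : Fin n) : E n := ypart (Pi.single i 1)

/-- The coordinate vector `∂/∂xⁱ`. -/
def pdx (i : Fin n) : E n := (0, Pi.single i 1, 0)

/-- Action of a vector field `X` on a function `f`: `X(f)(p) = df_p(X(p))`. -/
def vfd (X : E n → E n) (f : E n → ℝ) : E n → ℝ := fun p => fderiv ℝ f p (X p)

/-- Lie bracket of vector fields on `E n`. -/
def lieb (X Y : E n → E n) : E n → E n :=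
  fun p => fderiv ℝ Y p (X p) - fderiv ℝ X p (Y p)

/-- The semispray `S = ∂/∂t + Σ yⁱ ∂/∂xⁱ − 2 Σ Gⁱ ∂/∂yⁱ` associated to `G`. -/
def Ssp (G : E n → Fin n → ℝ) : E n → E n := fun p => (1, p.2.2, fun i => -(2 * G p i))

/-- Nonlinear connection coefficients `Nⁱⱼ = ∂Gⁱ/∂yʲ`. -/
def Nc (G : E n → Fin n → ℝ) (i j : Fin n) : E n → ℝ :=
  fun p => fderiv ℝ (fun q => G q i) p (pdy j)

/-- `Nⁱ₀ = 2Gⁱ − Σⱼ Nⁱⱼ yʲ`. -/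
def N0c (G : E n → Fin n → ℝ) (i : Fin n) : E n → ℝ :=
  fun p => 2 * G p i - ∑ j, Nc G i j p * p.2.2 j

/-- The horizontal vector field `δ/δxⁱ = ∂/∂xⁱ − Σⱼ Nʲᵢ ∂/∂yʲ`. -/
def ddx (G : E n → Fin n → ℝ) (i : Fin n) : E n → E n :=
  fun p => (0, Pi.single i 1, fun j => -(Nc G j i p))

/-- The contact 1-form `δxⁱ = dxⁱ − yⁱ dt`. -/
def dxi (i : Fin n) : E n → E n → ℝ := fun p w => w.2.1 i - p.2.2 i * w.1

/-- The 1-form `δyⁱ = dyⁱ + Σⱼ Nⁱⱼ dxʲ + Nⁱ₀ dt`. -/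
def dyi (G : E n → Fin n → ℝ) (i : Fin n) : E n → E n → ℝ :=
  fun p w => w.2.2 i + (∑ j, Nc G i j p * w.2.1 j) + N0c G i p * w.1

/-- The vertical endomorphism `J = Σᵢ ∂/∂yⁱ ⊗ δxⁱ`. -/
def Jv : E n → E n → E n := fun p w => ypart (fun i => dxi i p w)

/-- The horizontal projector `h = S ⊗ dt + Σᵢ δ/δxⁱ ⊗ δxⁱ`. -/
def hv (G : E n → Fin n → ℝ) : E n → E n → E n :=
  fun p w => w.1 • Ssp G p + ∑ i, dxi i p w • ddx G i p

/-- Jacobi endomorphism components `Rⁱⱼ = 2 ∂Gⁱ/∂xʲ − Σₖ Nⁱₖ Nᵏⱼ − S(Nⁱⱼ)`. -/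
def Rjac (G : E n → Fin n → ℝ) (i j : Fin n) : E n → ℝ := fun p =>
  2 * fderiv ℝ (fun q => G q i) p (pdx j) - (∑ k, Nc G i k p * Nc G k j p)
    - vfd (Ssp G) (Nc G i j) p

/-- Curvature components `Rⁱⱼₖ = (δ/δxᵏ)(Nⁱⱼ) − (δ/δxʲ)(Nⁱₖ)`. -/
def Rcur (G : E n → Fin n → ℝ) (i j k : Fin n) : E n → ℝ := fun p =>
  fderiv ℝ (Nc G i j) p (ddx G k p) - fderiv ℝ (Nc G i k) p (ddx G j p)

/-- The Jacobi endomorphism `Φ = Σᵢⱼ Rʲᵢ ∂/∂yʲ ⊗ δxⁱ`. -/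
def Phi (G : E n → Fin n → ℝ) : E n → E n → E n :=
  fun p w => ypart (fun j => ∑ i, Rjac G j i p * dxi i p w)

/-- The tensor `Ψ = Σᵢ δ/δxⁱ ⊗ δyⁱ − Σᵢⱼ Rʲᵢ ∂/∂yʲ ⊗ δxⁱ`. -/
def Psi (G : E n → Fin n → ℝ) : E n → E n → E n :=
  fun p w => (∑ i, dyi G i p w • ddx G i p) - Phi G p w

/-- Lie derivative of a 1-form `θ` along `X`, evaluated on a vector field `Y`:
`(L_Xθ)(Y) = X(θ(Y)) − θ([X,Y])`. -/
def lieD (X : E n → E n) (θ : E n → E n → ℝ) (Y : E n → E n) : E n → ℝ :=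
  fun p => fderiv ℝ (fun q => θ q (Y q)) p (X p) - θ p (lieb X Y p)

/-- Exterior derivative of a 1-form: `dθ(X,Y) = X(θ(Y)) − Y(θ(X)) − θ([X,Y])`. -/
def extD (θ : E n → E n → ℝ) (X Y : E n → E n) : E n → ℝ :=
  fun p => fderiv ℝ (fun q => θ q (Y q)) p (X p) - fderiv ℝ (fun q => θ q (X q)) p (Y p)
    - θ p (lieb X Y p)

/-- Exterior derivative of a 1-form given as an operator on vector fields. -/
def extDop (α : (E n → E n) → E n → ℝ) (X Y : E n → E n) : E n → ℝ :=
  fun p => fderiv ℝ (α Y) p (X p) - fderiv ℝ (α X) p (Y p) - α (lieb X Y) p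

/-- The semi-basic 1-form `θ₀ dt + Σᵢ θᵢ δxⁱ`. -/
def sbform (θ0 : E n → ℝ) (θc : Fin n → E n → ℝ) : E n → E n → ℝ :=
  fun p w => θ0 p * w.1 + ∑ i, θc i p * dxi i p w

/-- `d_Jθ(X,Y) = dθ(JX,Y) + dθ(X,JY)` for a semi-basic 1-form `θ`. -/
def dJf (θ : E n → E n → ℝ) (X Y : E n → E n) : E n → ℝ :=
  fun p => extD θ (fun q => Jv q (X q)) Y p + extD θ X (fun q => Jv q (Y q)) p

/-- `d_hθ(X,Y) = dθ(hX,Y) + dθ(X,hY) − dθ(X,Y)` for a semi-basic 1-form `θ`. -/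
def dhf (G : E n → Fin n → ℝ) (θ : E n → E n → ℝ) (X Y : E n → E n) : E n → ℝ :=
  fun p => extD θ (fun q => hv G q (X q)) Y p + extD θ X (fun q => hv G q (Y q)) p
    - extD θ X Y p

/-- `d_Φθ(X,Y) = dθ(ΦX,Y) + dθ(X,ΦY)` for a semi-basic 1-form `θ`. -/
def dPhif (G : E n → Fin n → ℝ) (θ : E n → E n → ℝ) (X Y : E n → E n) : E n → ℝ :=
  fun p => extD θ (fun q => Phi G q (X q)) Y p + extD θ X (fun q => Phi G q (Y q)) p

/-- Lie derivative of the 2-form `dθ` along a vector field `SS`: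
`(L_S dθ)(X,Y) = S(dθ(X,Y)) − dθ([S,X],Y) − dθ(X,[S,Y])`. -/
def lieD2 (SS : E n → E n) (θ : E n → E n → ℝ) (X Y : E n → E n) : E n → ℝ :=
  fun p => fderiv ℝ (extD θ X Y) p (SS p) - extD θ (lieb SS X) Y p - extD θ X (lieb SS Y) p

/-- `∇dθ = L_S(dθ) − i_Ψ(dθ)`. -/
def nabD (G : E n → Fin n → ℝ) (θ : E n → E n → ℝ) (X Y : E n → E n) : E n → ℝ :=
  fun p => lieD2 (Ssp G) θ X Y p
    - (extD θ (fun q => Psi G q (X q)) Y p + extD θ X (fun q => Psi G q (Y q)) p)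

/-- The dynamical covariant derivative of an `n`-tuple of functions:
`(∇f)ᵢ = S(fᵢ) − Σⱼ Nʲᵢ fⱼ`. -/
def covd (G : E n → Fin n → ℝ) (f : Fin n → E n → ℝ) : Fin n → E n → ℝ :=
  fun i p => vfd (Ssp G) (f i) p - ∑ j, Nc G j i p * f j p

/-- The curvature 2-form `R(X,Y)` with components `Rᵏᵢⱼ`, `Rᵏᵢ` (see Statement 4). -/
def Rform (G : E n → Fin n → ℝ) : E n → E n → E n → E n := fun p u w =>
  ypart fun k =>
    (1 / 2 : ℝ) * ∑ i, ∑ j, Rcur G k i j p * (dxi i p u * dxi j p w - dxi i p w * dxi j p u)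
    + ∑ i, Rjac G k i p * (u.1 * dxi i p w - w.1 * dxi i p u)

/-!
`J` and `Φ` are both vertical-valued semi-basic tensors `L = Σ bʲᵢ ∂/∂yʲ ⊗ δxⁱ`. For such `L` the
terms of `[J,L](X,Y)` containing derivatives of `X` and `Y` cancel, and what survives comes from
differentiating the coefficients `bʲᵢ` and the `yⁱ` in `δxⁱ = dxⁱ − yⁱ dt` along vertical vectors:
`[J,L](X,Y) = Σ (∂bᵏᵢ/∂yᵐ) (δxᵐ ∧ δxⁱ)(X,Y) ∂/∂yᵏ + 2 (dt ∧ L)(X,Y)`.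
For `b = Rʲᵢ` the antisymmetrised vertical derivatives are `∂Rᵏⱼ/∂yⁱ − ∂Rᵏᵢ/∂yʲ = 3 Rᵏᵢⱼ`, by the
symmetry of `∂Nᵏⱼ/∂yⁱ` in `i, j` and the commutator `[∂/∂yⁱ, S] = 2 δ/δxⁱ − ∂/∂xⁱ`.
-/

section Smooth

variable {α β : Type*} [NormedAddCommGroup α] [NormedSpace ℝ α]
  [NormedAddCommGroup β] [NormedSpace ℝ β] {f : α → β}

theorem Cinf.differentiableAt (hf : Cinf f) (p : α) : DifferentiableAt ℝ f p :=
  (hf.differentiable (by simp)).differentiableAt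

theorem Cinf.fderiv_apply (hf : Cinf f) {V : α → α} (hV : Cinf V) :
    Cinf fun p => fderiv ℝ f p (V p) :=
  (hf.fderiv_right (m := (⊤ : ℕ∞)) (by exact_mod_cast le_rfl)).clm_apply hV

theorem Cinf.fderiv_apply_lieBracket (hf : Cinf f) {V W : α → α} {p : α}
    (hV : DifferentiableAt ℝ V p) (hW : DifferentiableAt ℝ W p) :
    fderiv ℝ f p (VectorField.lieBracket ℝ V W p)
      = fderiv ℝ (fun q => fderiv ℝ f q (W q)) p (V p)
        - fderiv ℝ (fun q => fderiv ℝ f q (V q)) p (W p) :=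
  VectorField.fderiv_apply_lieBracket hf.contDiffAt
    (by simpa using WithTop.coe_le_coe.2 (le_top : (2 : ℕ∞) ≤ ⊤)) hW hV

theorem Cinf.fderiv_fderiv_comm (hf : Cinf f) (p v w : α) :
    fderiv ℝ (fun q => fderiv ℝ f q w) p v = fderiv ℝ (fun q => fderiv ℝ f q v) p w := by
  have h := hf.fderiv_apply_lieBracket (p := p) (differentiableAt_const v)
    (differentiableAt_const w)
  simpa [VectorField.lieBracket, sub_eq_zero] using h.symm

end Smooth

section Coordinates

@[simp] theorem ypart_snd_snd (a : Fin n → ℝ) : (ypart a).2.2 = a := rfl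

@[simp] theorem ypart_add (a b : Fin n → ℝ) : ypart (a + b) = ypart a + ypart b := by
  ext <;> simp [ypart]

@[simp] theorem ypart_sub (a b : Fin n → ℝ) : ypart (a - b) = ypart a - ypart b := by
  ext <;> simp [ypart]

@[simp] theorem ypart_smul (c : ℝ) (a : Fin n → ℝ) : ypart (c • a) = c • ypart a := by
  ext <;> simp [ypart]

theorem ypart_eq_sum (a : Fin n → ℝ) : ypart a = ∑ m, a m • pdy m := by
  ext <;> simp [ypart, pdy, Prod.fst_sum, Prod.snd_sum, Finset.sum_apply, Pi.single_apply]

theorem ddx_eq (G : E n → Fin n → ℝ) (j : Fin n) (p : E n) :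
    ddx G j p = pdx j - ∑ m, Nc G m j p • pdy m := by
  ext <;> simp [ddx, pdx, pdy, ypart, Prod.fst_sum, Prod.snd_sum, Finset.sum_apply,
    Pi.single_apply]

@[simp] theorem dxi_sub (i : Fin n) (p v w : E n) : dxi i p (v - w) = dxi i p v - dxi i p w := by
  simp only [dxi, Prod.fst_sub, Prod.snd_sub, Pi.sub_apply]; ring

@[simp] theorem dxi_ypart (i : Fin n) (p : E n) (a : Fin n → ℝ) : dxi i p (ypart a) = 0 := by
  simp [dxi, ypart]

theorem fderiv_apply_ypart {F : Type*} [NormedAddCommGroup F] [NormedSpace ℝ F]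
    (f : E n → F) (p : E n) (a : Fin n → ℝ) :
    fderiv ℝ f p (ypart a) = ∑ m, a m • fderiv ℝ f p (pdy m) := by
  simp [ypart_eq_sum]

theorem fderiv_apply_ddx (G : E n → Fin n → ℝ) (f : E n → ℝ) (p : E n) (j : Fin n) :
    fderiv ℝ f p (ddx G j p) = fderiv ℝ f p (pdx j) - ∑ m, Nc G m j p * fderiv ℝ f p (pdy m) := by
  simp [ddx_eq]

end Coordinates

section Derivatives

variable {p : E n}

theorem fderiv_pi_apply {a : E n → Fin n → ℝ} (ha : DifferentiableAt ℝ a p) (v : E n) (k : Fin n) :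
    fderiv ℝ a p v k = fderiv ℝ (fun q => a q k) p v := by
  rw [fderiv_apply ha k]; rfl

theorem fderiv_fst_comp {B : E n → E n} (hB : DifferentiableAt ℝ B p) (v : E n) :
    fderiv ℝ (fun q => (B q).1) p v = (fderiv ℝ B p v).1 := by
  simp [fderiv.fst hB]

theorem fderiv_xcoord_comp {B : E n → E n} (hB : DifferentiableAt ℝ B p) (j : Fin n) (v : E n) :
    fderiv ℝ (fun q => (B q).2.1 j) p v = (fderiv ℝ B p v).2.1 j := by
  simp [fderiv_apply hB.snd.fst, fderiv.fst hB.snd, fderiv.snd hB]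

theorem fderiv_ycoord_comp {B : E n → E n} (hB : DifferentiableAt ℝ B p) (j : Fin n) (v : E n) :
    fderiv ℝ (fun q => (B q).2.2 j) p v = (fderiv ℝ B p v).2.2 j := by
  simp [fderiv_apply hB.snd.snd, fderiv.snd hB.snd, fderiv.snd hB]

theorem fderiv_ycoord (i : Fin n) (v : E n) : fderiv ℝ (fun q : E n => q.2.2 i) p v = v.2.2 i := by
  simpa using fderiv_ycoord_comp differentiableAt_id i v

theorem fderiv_ypart_comp {a : E n → Fin n → ℝ} (ha : DifferentiableAt ℝ a p) (v : E n) :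
    fderiv ℝ (fun q => ypart (a q)) p v = ypart (fderiv ℝ a p v) := by
  let L : (Fin n → ℝ) →L[ℝ] E n :=
    (ContinuousLinearMap.inr ℝ ℝ _).comp (ContinuousLinearMap.inr ℝ (Fin n → ℝ) _)
  exact congrArg (· v) (L.hasFDerivAt.comp p ha.hasFDerivAt).fderiv

theorem differentiableAt_dxi_comp {X : E n → E n} (hX : DifferentiableAt ℝ X p) (i : Fin n) :
    DifferentiableAt ℝ (fun q => dxi i q (X q)) p := by
  unfold dxi; fun_prop

theorem fderiv_dxi_comp {X : E n → E n} (hX : DifferentiableAt ℝ X p) (i : Fin n) (v : E n) :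
    fderiv ℝ (fun q => dxi i q (X q)) p v = dxi i p (fderiv ℝ X p v) - v.2.2 i * (X p).1 := by
  have h1 : DifferentiableAt ℝ (fun q => (X q).1) p := by fun_prop
  have h2 : DifferentiableAt ℝ (fun q => (X q).2.1 i) p := by fun_prop
  have h3 : DifferentiableAt ℝ (fun q : E n => q.2.2 i) p := by fun_prop
  simp only [dxi]
  rw [fderiv_fun_sub h2 (h3.fun_mul h1), fderiv_fun_mul h3 h1]
  simp [fderiv_fst_comp hX, fderiv_xcoord_comp hX, fderiv_ycoord]
  ring

end Derivatives

section VerticalFields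

variable {X : E n → E n} {a c : E n → Fin n → ℝ} {p : E n}

theorem lieb_ypart (ha : DifferentiableAt ℝ a p) (hc : DifferentiableAt ℝ c p) :
    lieb (fun q => ypart (a q)) (fun q => ypart (c q)) p
      = ypart (fderiv ℝ c p (ypart (a p)) - fderiv ℝ a p (ypart (c p))) := by
  simp only [lieb, fderiv_ypart_comp ha, fderiv_ypart_comp hc, ypart_sub]

theorem dxi_lieb_ypart_left (hc : DifferentiableAt ℝ c p) (i : Fin n) :
    dxi i p (lieb (fun q => ypart (c q)) X p) = dxi i p (fderiv ℝ X p (ypart (c p))) := by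
  simp [lieb, fderiv_ypart_comp hc]

theorem dxi_lieb_ypart_right (hc : DifferentiableAt ℝ c p) (i : Fin n) :
    dxi i p (lieb X (fun q => ypart (c q)) p) = -dxi i p (fderiv ℝ X p (ypart (c p))) := by
  simp [lieb, fderiv_ypart_comp hc]

end VerticalFields

/-- `Σᵢⱼ bʲᵢ ∂/∂yʲ ⊗ δxⁱ`; `Phi G` is `vertSemibasic (Rjac G)` by definition. -/
def vertSemibasic (b : Fin n → Fin n → E n → ℝ) : E n → E n → E n :=
  fun p w => ypart fun j => ∑ i, b j i p * dxi i p w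

def frolicherNijenhuis (K L : E n → E n → E n) (X Y : E n → E n) : E n → E n := fun p =>
  lieb (fun q => K q (X q)) (fun q => L q (Y q)) p
    + lieb (fun q => L q (X q)) (fun q => K q (Y q)) p
    + K p (L p (lieb X Y p)) + L p (K p (lieb X Y p))
    - K p (lieb X (fun q => L q (Y q)) p)
    - K p (lieb (fun q => L q (X q)) Y p)
    - L p (lieb X (fun q => K q (Y q)) p)
    - L p (lieb (fun q => K q (X q)) Y p)

section BracketWithJ

variable {b : Fin n → Fin n → E n → ℝ} {X Y : E n → E n} {p : E n}

theorem fderiv_dxi_pi (hX : DifferentiableAt ℝ X p) (v : E n) (i : Fin n) :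
    fderiv ℝ (fun q i => dxi i q (X q)) p v i = dxi i p (fderiv ℝ X p v) - v.2.2 i * (X p).1 := by
  rw [fderiv_pi_apply (differentiableAt_pi.2 (differentiableAt_dxi_comp hX)), fderiv_dxi_comp hX]

theorem fderiv_vertSemibasic_pi (hb : ∀ k i, DifferentiableAt ℝ (b k i) p)
    (hX : DifferentiableAt ℝ X p) (v : E n) (k : Fin n) :
    fderiv ℝ (fun q k => ∑ i, b k i q * dxi i q (X q)) p v k
      = ∑ i, fderiv ℝ (b k i) p v * dxi i p (X p) + ∑ i, b k i p * dxi i p (fderiv ℝ X p v)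
        - (∑ i, b k i p * v.2.2 i) * (X p).1 := by
  have hc : ∀ k i, DifferentiableAt ℝ (fun q => b k i q * dxi i q (X q)) p :=
    fun k i => (hb k i).mul (differentiableAt_dxi_comp hX i)
  rw [fderiv_pi_apply (differentiableAt_pi.2 fun k => .fun_sum fun i _ => hc k i),
    fderiv_fun_sum fun i _ => hc k i, Finset.sum_mul, ← Finset.sum_add_distrib,
    ← Finset.sum_sub_distrib]
  simp only [FunLike.coe_sum, Finset.sum_apply]
  refine Finset.sum_congr rfl fun i _ => ?_
  rw [fderiv_fun_mul (hb k i) (differentiableAt_dxi_comp hX i)]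
  simp [fderiv_dxi_comp hX]
  ring

theorem frolicherNijenhuis_Jv_vertSemibasic (hb : ∀ k i, DifferentiableAt ℝ (b k i) p)
    (hX : DifferentiableAt ℝ X p) (hY : DifferentiableAt ℝ Y p) :
    frolicherNijenhuis Jv (vertSemibasic b) X Y p
      = ypart (fun k => ∑ i, (fderiv ℝ (b k i) p (Jv p (X p)) * dxi i p (Y p)
          - fderiv ℝ (b k i) p (Jv p (Y p)) * dxi i p (X p)))
        + (2 * (X p).1) • vertSemibasic b p (Y p) - (2 * (Y p).1) • vertSemibasic b p (X p) := by
  have hJ : ∀ Z : E n → E n, (fun q => Jv q (Z q)) = fun q => ypart fun i => dxi i q (Z q) :=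
    fun _ => rfl
  have hL : ∀ Z : E n → E n, (fun q => vertSemibasic b q (Z q))
      = fun q => ypart fun k => ∑ i, b k i q * dxi i q (Z q) :=
    fun _ => rfl
  have ha : ∀ {Z : E n → E n}, DifferentiableAt ℝ Z p →
      DifferentiableAt ℝ (fun q i => dxi i q (Z q)) p :=
    fun hZ => differentiableAt_pi.2 (differentiableAt_dxi_comp hZ)
  have hc : ∀ {Z : E n → E n}, DifferentiableAt ℝ Z p →
      DifferentiableAt ℝ (fun q k => ∑ i, b k i q * dxi i q (Z q)) p :=
    fun hZ => differentiableAt_pi.2 fun k => .fun_sum fun i _ =>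
      (hb k i).mul (differentiableAt_dxi_comp hZ i)
  simp only [frolicherNijenhuis, hJ, hL]
  rw [lieb_ypart (ha hX) (hc hY), lieb_ypart (hc hX) (ha hY)]
  simp only [Jv, vertSemibasic, dxi_lieb_ypart_left (hc hX), dxi_lieb_ypart_right (hc hY),
    dxi_lieb_ypart_right (ha hY), dxi_lieb_ypart_left (ha hX), dxi_ypart, mul_zero,
    Finset.sum_const_zero, ← ypart_add, ← ypart_sub, ← ypart_smul]
  congr 1
  funext k
  simp only [Pi.add_apply, Pi.sub_apply, Pi.smul_apply, fderiv_vertSemibasic_pi hb hX,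
    fderiv_vertSemibasic_pi hb hY, fderiv_dxi_pi hX, fderiv_dxi_pi hY, ypart_snd_snd, smul_eq_mul,
    mul_neg, Finset.sum_neg_distrib, Finset.sum_sub_distrib]
  ring

end BracketWithJ

section Jacobi

variable {G : E n → Fin n → ℝ}

theorem Cinf.component (hG : Cinf G) (i : Fin n) : Cinf fun q => G q i :=
  contDiff_pi.1 hG i

theorem Cinf.nc (hG : Cinf G) (i j : Fin n) : Cinf (Nc G i j) :=
  (hG.component i).fderiv_apply contDiff_const

theorem Cinf.ssp (hG : Cinf G) : Cinf (Ssp G) :=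
  contDiff_const.prodMk ((contDiff_snd.comp contDiff_snd).prodMk
    (contDiff_pi.2 fun i => ((hG.component i).const_smul (2 : ℝ)).neg))

theorem Cinf.rjac (hG : Cinf G) (i j : Fin n) : Cinf (Rjac G i j) :=
  ((contDiff_const.mul ((hG.component i).fderiv_apply contDiff_const)).sub
    (ContDiff.sum fun k _ => (hG.nc i k).mul (hG.nc k j))).sub
    ((hG.nc i j).fderiv_apply hG.ssp)

theorem fderiv_Nc_pdy_comm (hG : Cinf G) (k i j : Fin n) (q : E n) :
    fderiv ℝ (Nc G k j) q (pdy i) = fderiv ℝ (Nc G k i) q (pdy j) :=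
  (hG.component k).fderiv_fderiv_comm q (pdy i) (pdy j)

theorem fderiv_Ssp_pdy (hG : Cinf G) (p : E n) (i : Fin n) :
    fderiv ℝ (Ssp G) p (pdy i) = (2 : ℝ) • ddx G i p - pdx i := by
  have hS := hG.ssp.differentiableAt p
  ext j
  · rw [← fderiv_fst_comp hS]
    simp [Ssp, ddx, pdx]
  · rw [← fderiv_xcoord_comp hS]
    simp [Ssp, fderiv_ycoord, ddx, pdx, pdy, ypart, Pi.single_apply]
    split_ifs <;> norm_num
  · rw [← fderiv_ycoord_comp hS]
    simp [Ssp, fderiv_fun_neg, fderiv_const_mul ((hG.component j).differentiableAt p), Nc, ddx,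
      pdx]

theorem fderiv_vfd_Ssp_pdy (hG : Cinf G) {f : E n → ℝ} (hf : Cinf f) (p : E n) (i : Fin n) :
    fderiv ℝ (vfd (Ssp G) f) p (pdy i)
      = vfd (Ssp G) (fun q => fderiv ℝ f q (pdy i)) p
        + 2 * fderiv ℝ f p (ddx G i p) - fderiv ℝ f p (pdx i) := by
  have h := hf.fderiv_apply_lieBracket (differentiableAt_const (pdy i)) (hG.ssp.differentiableAt p)
  simp only [VectorField.lieBracket, fderiv_const_apply, zero_apply, sub_zero, fderiv_Ssp_pdy hG,
    map_sub, map_smul, smul_eq_mul] at h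
  unfold vfd
  linarith

theorem fderiv_Rjac_pdy (hG : Cinf G) (p : E n) (k j i : Fin n) :
    fderiv ℝ (Rjac G k j) p (pdy i)
      = 2 * fderiv ℝ (Nc G k i) p (pdx j)
        - ∑ m, (Nc G k m p * fderiv ℝ (Nc G m j) p (pdy i)
          + Nc G m j p * fderiv ℝ (Nc G k m) p (pdy i))
        - (vfd (Ssp G) (fun q => fderiv ℝ (Nc G k j) q (pdy i)) p
          + 2 * fderiv ℝ (Nc G k j) p (ddx G i p) - fderiv ℝ (Nc G k j) p (pdx i)) := by
  have hN : ∀ a b, DifferentiableAt ℝ (Nc G a b) p := fun a b => (hG.nc a b).differentiableAt p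
  have hx : DifferentiableAt ℝ (fun q => fderiv ℝ (fun q' => G q' k) q (pdx j)) p :=
    ((hG.component k).fderiv_apply contDiff_const).differentiableAt p
  have hs : DifferentiableAt ℝ (fun q => ∑ m, Nc G k m q * Nc G m j q) p :=
    .fun_sum fun m _ => (hN k m).mul (hN m j)
  have hS : DifferentiableAt ℝ (vfd (Ssp G) (Nc G k j)) p :=
    ((hG.nc k j).fderiv_apply hG.ssp).differentiableAt p
  unfold Rjac
  rw [fderiv_fun_sub ((hx.const_mul 2).fun_sub hs) hS, fderiv_fun_sub (hx.const_mul 2) hs,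
    fderiv_const_mul hx, fderiv_fun_sum fun m _ => (hN k m).fun_mul (hN m j)]
  simp only [sub_apply, smul_apply, FunLike.coe_sum, Finset.sum_apply, smul_eq_mul, add_apply,
    fderiv_vfd_Ssp_pdy hG (hG.nc k j), fderiv_fun_mul (hN _ _) (hN _ _)]
  rw [(hG.component k).fderiv_fderiv_comm]
  rfl

theorem fderiv_Rjac_pdy_sub (hG : Cinf G) (p : E n) (k i j : Fin n) :
    fderiv ℝ (Rjac G k j) p (pdy i) - fderiv ℝ (Rjac G k i) p (pdy j) = 3 * Rcur G k i j p := by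
  rw [fderiv_Rjac_pdy hG, fderiv_Rjac_pdy hG]
  simp only [Rcur, fderiv_apply_ddx, fderiv_Nc_pdy_comm hG, Finset.sum_add_distrib]
  ring

end Jacobi

theorem two_mul_sum_sum_mul_wedge {R ι : Type*} [CommRing R] [Fintype ι] (f : ι → ι → R)
    (a b : ι → R) :
    2 * ∑ i, ∑ j, f i j * (a i * b j - b i * a j)
      = ∑ i, ∑ j, (f i j - f j i) * (a i * b j - b i * a j) := by
  have hswap : ∑ i, ∑ j, f j i * (a i * b j - b i * a j)
      = -∑ i, ∑ j, f i j * (a i * b j - b i * a j) := by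
    rw [Finset.sum_comm, ← Finset.sum_neg_distrib]
    refine Finset.sum_congr rfl fun i _ => ?_
    rw [← Finset.sum_neg_distrib]
    exact Finset.sum_congr rfl fun j _ => by ring
  simp only [sub_mul, Finset.sum_sub_distrib, hswap]
  ring

theorem sum_fderiv_Rjac_Jv_mul_dxi {G : E n → Fin n → ℝ} (hG : Cinf G) (p u w : E n) (k : Fin n) :
    ∑ i, (fderiv ℝ (Rjac G k i) p (Jv p u) * dxi i p w
        - fderiv ℝ (Rjac G k i) p (Jv p w) * dxi i p u)
      = 3 * ((1 / 2) * ∑ i, ∑ j, Rcur G k i j p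
          * (dxi i p u * dxi j p w - dxi i p w * dxi j p u)) := by
  have h := two_mul_sum_sum_mul_wedge (fun m i => fderiv ℝ (Rjac G k i) p (pdy m))
    (fun i => dxi i p u) (fun i => dxi i p w)
  simp only [fderiv_Rjac_pdy_sub hG, mul_assoc, ← Finset.mul_sum] at h
  have hJ : ∀ v i, fderiv ℝ (Rjac G k i) p (Jv p v)
      = ∑ m, dxi m p v * fderiv ℝ (Rjac G k i) p (pdy m) := by
    intro v i
    simp only [Jv, fderiv_apply_ypart, smul_eq_mul]
  have hL : ∑ i, (fderiv ℝ (Rjac G k i) p (Jv p u) * dxi i p w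
        - fderiv ℝ (Rjac G k i) p (Jv p w) * dxi i p u)
      = ∑ m, ∑ i, fderiv ℝ (Rjac G k i) p (pdy m)
          * (dxi m p u * dxi i p w - dxi m p w * dxi i p u) := by
    simp only [hJ, Finset.sum_mul, ← Finset.sum_sub_distrib]
    rw [Finset.sum_comm]
    exact Finset.sum_congr rfl fun m _ => Finset.sum_congr rfl fun i _ => by ring
  rw [hL]
  linear_combination h / 2

theorem Rform_eq (G : E n → Fin n → ℝ) (p u w : E n) :
    Rform G p u w
      = ypart (fun k => (1 / 2 : ℝ) * ∑ i, ∑ j, Rcur G k i j p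
          * (dxi i p u * dxi j p w - dxi i p w * dxi j p u))
        + u.1 • Phi G p w - w.1 • Phi G p u := by
  ext k <;> simp [Rform, Phi, ypart, mul_sub, Finset.sum_sub_distrib, Finset.mul_sum, mul_left_comm]
  ring

theorem stmt7_general (n : ℕ) (G : E n → Fin n → ℝ) (hG : Cinf G) :
    ∀ X Y : E n → E n, Cinf X → Cinf Y → ∀ p : E n,
      lieb (fun q => Jv q (X q)) (fun q => Phi G q (Y q)) p
      + lieb (fun q => Phi G q (X q)) (fun q => Jv q (Y q)) p
      + Jv p (Phi G p (lieb X Y p)) + Phi G p (Jv p (lieb X Y p))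
      - Jv p (lieb X (fun q => Phi G q (Y q)) p)
      - Jv p (lieb (fun q => Phi G q (X q)) Y p)
      - Phi G p (lieb X (fun q => Jv q (Y q)) p)
      - Phi G p (lieb (fun q => Jv q (X q)) Y p)
      = (3 : ℝ) • Rform G p (X p) (Y p) + (Y p).1 • Phi G p (X p) - (X p).1 • Phi G p (Y p) := by
  intro X Y hX hY p
  have hquad : ypart (fun k => ∑ i, (fderiv ℝ (Rjac G k i) p (Jv p (X p)) * dxi i p (Y p)
      - fderiv ℝ (Rjac G k i) p (Jv p (Y p)) * dxi i p (X p)))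
      = (3 : ℝ) • ypart (fun k => (1 / 2 : ℝ) * ∑ i, ∑ j, Rcur G k i j p
          * (dxi i p (X p) * dxi j p (Y p) - dxi i p (Y p) * dxi j p (X p))) := by
    rw [← ypart_smul]
    exact congrArg ypart (funext fun k => sum_fderiv_Rjac_Jv_mul_dxi hG p (X p) (Y p) k)
  change frolicherNijenhuis Jv (vertSemibasic (Rjac G)) X Y p = _
  rw [frolicherNijenhuis_Jv_vertSemibasic (fun k i => (hG.rjac k i).differentiableAt p)
    (hX.differentiableAt p) (hY.differentiableAt p), hquad, Rform_eq]
  change _ + _ • Phi G p (Y p) - _ • Phi G p (X p) = _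
  module

/-- The Frölicher–Nijenhuis bracket of the vertical endomorphism
`J` and the Jacobi endomorphism `Φ` satisfies `[J,Φ] = 3R + Φ∧dt`: for all smooth
`X, Y`,
`[JX,ΦY] + [ΦX,JY] + (J∘Φ + Φ∘J)([X,Y]) − J([X,ΦY]) − J([ΦX,Y]) − Φ([X,JY]) − Φ([JX,Y])
  = 3 R(X,Y) + dt(Y)Φ(X) − dt(X)Φ(Y)`. -/
theorem stmt7 (n : ℕ) (hn : 1 ≤ n) (G : E n → Fin n → ℝ) (hG : Cinf G) :
    ∀ X Y : E n → E n, Cinf X → Cinf Y → ∀ p : E n,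
      lieb (fun q => Jv q (X q)) (fun q => Phi G q (Y q)) p
      + lieb (fun q => Phi G q (X q)) (fun q => Jv q (Y q)) p
      + Jv p (Phi G p (lieb X Y p)) + Phi G p (Jv p (lieb X Y p))
      - Jv p (lieb X (fun q => Phi G q (Y q)) p)
      - Jv p (lieb (fun q => Phi G q (X q)) Y p)
      - Phi G p (lieb X (fun q => Jv q (Y q)) p)
      - Phi G p (lieb (fun q => Jv q (X q)) Y p)
      = (3 : ℝ) • Rform G p (X p) (Y p) + (Y p).1 • Phi G p (X p) - (X p).1 • Phi G p (Y p) :=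
  stmt7_general n G hG
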